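/- Let G be a group and α : G → G an endomorphism of G. Equip the set ℕ × G with the product (m,g)(n,h) = (m+n, α^n(g)h). Then ℕ × G with this product is a left Rees monoid in which the partially ordered set of principal right ideals under inclusion is an infinite descending chain order-isomorphic to the natural numbers with their reverse order. Conversely, every left Rees monoid whose partially ordered set of principal right ideals is an infinite descending chain order-isomorphic to the natural numbers with their reverse order is isomorphic as a monoid to one constructed in this way from some group G and endomorphism α of G. -/

import Mathlib

/-- A length function on a monoid: a homomorphism to (ℕ, +) whose zero set is
exactly the set of units. -/
def IsLengthFunction {S : Type*} [Monoid S] (l : S → ℕ) : Prop :=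
  (∀ a b : S, l (a * b) = l a + l b) ∧ ∀ a : S, l a = 0 ↔ IsUnit a

/-- An equidivisible monoid. -/
def Equidivisible (S : Type*) [Monoid S] : Prop :=
  ∀ a b c d : S, a * b = c * d →
    (∃ u : S, a = c * u ∧ d = u * b) ∨ ∃ v : S, c = a * v ∧ b = v * d

/-- A Levi monoid: an equidivisible monoid equipped with a length function and
containing at least one non-unit. -/
def IsLeviMonoid (S : Type*) [Monoid S] : Prop :=
  Equidivisible S ∧ (∃ l : S → ℕ, IsLengthFunction l) ∧ ∃ a : S, ¬IsUnit a

/-- A left Rees monoid: a left cancellative Levi monoid. -/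
def IsLeftReesMonoid (S : Type*) [Monoid S] : Prop :=
  (∀ a b c : S, a * b = a * c → b = c) ∧ IsLeviMonoid S

/-- The principal right ideal `aS`. -/
def rIdeal {S : Type*} [Monoid S] (a : S) : Set S := Set.range (a * ·)

/-- The set `ℕ × G`, as a carrier for the Rees product `ℕ ∗_α G`. -/
structure ReesProd (G : Type*) [Group G] (α : G →* G) where
  n : ℕ
  g : G

/-- The Rees product: multiplication `(m,g)(n,h) = (m+n, α^n(g)h)`. -/
instance ReesProd.instMonoid {G : Type*} [Group G] (α : G →* G) :
    Monoid (ReesProd G α) where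
  mul p q := ⟨p.n + q.n, (⇑α)^[q.n] p.g * q.g⟩
  one := ⟨0, 1⟩
  one_mul p := by
    show (⟨0 + p.n, (⇑α)^[p.n] (1 : G) * p.g⟩ : ReesProd G α) = p
    simp [iterate_map_one]
  mul_one p := by
    show (⟨p.n + 0, (⇑α)^[0] p.g * 1⟩ : ReesProd G α) = p
    simp
  mul_assoc p q r := by
    show (⟨(p.n + q.n) + r.n, (⇑α)^[r.n] ((⇑α)^[q.n] p.g * q.g) * r.g⟩ : ReesProd G α) =
      ⟨p.n + (q.n + r.n), (⇑α)^[q.n + r.n] p.g * ((⇑α)^[r.n] q.g * r.g)⟩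
    simp only [ReesProd.mk.injEq]
    refine ⟨add_assoc _ _ _, ?_⟩
    rw [iterate_map_mul, add_comm q.n r.n, Function.iterate_add_apply, mul_assoc]

/-!
In `ℕ ∗_α G` the length `(n, g) ↦ n` is a homomorphism vanishing exactly on the units `(0, g)`,
and `(m, g) ∈ (n, h)S` iff `n ≤ m`; so the principal right ideals form a chain indexed by `ℕ`,
and a left cancellative monoid whose principal right ideals are totally ordered is equidivisible.

Conversely, if the principal right ideals of a left Rees monoid `S` form a copy of `ℕᵒᵈ`, pick `a`
generating the second largest one. Every non-unit lies in `aS`, so by induction on length every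
element is `aⁿu` with `u` a unit, uniquely since `λ(aⁿu) = n λ(a)` and `aⁿ` is left cancellable.
Since `ua` is a non-unit of length `λ(a)` it equals `a α(u)` for a unique unit `α(u)`, which
defines an endomorphism `α` of the group of units, and `(n, u) ↦ aⁿu` is an isomorphism
`ℕ ∗_α Sˣ ≃* S`.
-/

abbrev PrincipalRightIdeal (S : Type*) [Monoid S] : Type _ := {T : Set S // ∃ a, T = rIdeal a}

section Monoid

variable {S : Type*} [Monoid S]

theorem mem_rIdeal {a b : S} : b ∈ rIdeal a ↔ ∃ s, a * s = b := Iff.rfl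

theorem mem_rIdeal_self (a : S) : a ∈ rIdeal a := ⟨1, mul_one a⟩

theorem rIdeal_subset_rIdeal_iff {a b : S} : rIdeal b ⊆ rIdeal a ↔ b ∈ rIdeal a := by
  refine ⟨fun h => h (mem_rIdeal_self b), ?_⟩
  rintro ⟨s, rfl⟩ _ ⟨t, rfl⟩
  exact ⟨s * t, (mul_assoc a s t).symm⟩

theorem rIdeal_eq_rIdeal_one_iff [IsLeftCancelMul S] {b : S} :
    rIdeal b = rIdeal 1 ↔ IsUnit b := by
  refine ⟨fun h => ?_, fun hb => ?_⟩
  · obtain ⟨s, hs⟩ : ∃ s, b * s = 1 := mem_rIdeal.1 (h ▸ mem_rIdeal_self 1)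
    have hsb : s * b = 1 := mul_left_cancel (a := b) (by rw [← mul_assoc, hs, one_mul, mul_one])
    exact ⟨⟨b, s, hs, hsb⟩, rfl⟩
  · obtain ⟨u, rfl⟩ := hb
    refine (rIdeal_subset_rIdeal_iff.2 ⟨(u : S), one_mul _⟩).antisymm
      (rIdeal_subset_rIdeal_iff.2 ⟨↑u⁻¹, u.mul_inv⟩)

theorem equidivisible_of_total [IsLeftCancelMul S]
    (htotal : ∀ a c : S, a ∈ rIdeal c ∨ c ∈ rIdeal a) : Equidivisible S := by
  intro a b c d h
  rcases htotal a c with ⟨u, rfl⟩ | ⟨v, rfl⟩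
  · exact Or.inl ⟨u, rfl, mul_left_cancel (h.symm.trans (mul_assoc c u b))⟩
  · exact Or.inr ⟨v, rfl, mul_left_cancel (h.trans (mul_assoc a v d))⟩

end Monoid

namespace IsLengthFunction

variable {S : Type*} [Monoid S] {l : S → ℕ}

theorem map_mul (hl : IsLengthFunction l) (a b : S) : l (a * b) = l a + l b := hl.1 a b

theorem eq_zero_iff (hl : IsLengthFunction l) {a : S} : l a = 0 ↔ IsUnit a := hl.2 a

theorem map_unit (hl : IsLengthFunction l) (u : Sˣ) : l u = 0 := hl.eq_zero_iff.2 u.isUnit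

theorem map_pow (hl : IsLengthFunction l) (a : S) (n : ℕ) : l (a ^ n) = n * l a := by
  induction n with
  | zero => simpa using hl.map_unit 1
  | succ n ih => rw [pow_succ, hl.map_mul, ih, Nat.succ_mul]

end IsLengthFunction

namespace ReesProd

variable {G : Type*} [Group G] {α : G →* G}

@[ext]
theorem ext {p q : ReesProd G α} (hn : p.n = q.n) (hg : p.g = q.g) : p = q := by
  cases p; cases q; congr

@[simp] theorem mul_n (p q : ReesProd G α) : (p * q).n = p.n + q.n := rfl

@[simp] theorem mul_g (p q : ReesProd G α) : (p * q).g = (⇑α)^[q.n] p.g * q.g := rfl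

@[simp] theorem one_n : (1 : ReesProd G α).n = 0 := rfl

@[simp] theorem one_g : (1 : ReesProd G α).g = 1 := rfl

theorem isUnit_iff {p : ReesProd G α} : IsUnit p ↔ p.n = 0 := by
  refine ⟨fun ⟨u, hu⟩ => ?_, fun hp => ?_⟩
  · have h := congrArg ReesProd.n u.mul_inv
    rw [mul_n, one_n, hu] at h
    omega
  · exact ⟨⟨p, ⟨0, p.g⁻¹⟩, by ext <;> simp [hp], by ext <;> simp [hp]⟩, rfl⟩

theorem isLengthFunction_n : IsLengthFunction (ReesProd.n : ReesProd G α → ℕ) :=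
  ⟨mul_n, fun _ => isUnit_iff.symm⟩

instance : IsLeftCancelMul (ReesProd G α) where
  mul_left_cancel p q r h := by
    have hn : q.n = r.n := Nat.add_left_cancel (congrArg ReesProd.n h)
    have hg : (⇑α)^[q.n] p.g * q.g = (⇑α)^[r.n] p.g * r.g := congrArg ReesProd.g h
    rw [← hn] at hg
    exact ext hn (mul_left_cancel hg)

theorem mem_rIdeal_iff {p q : ReesProd G α} : q ∈ rIdeal p ↔ p.n ≤ q.n := by
  refine ⟨fun ⟨r, hr⟩ => hr ▸ Nat.le_add_right p.n r.n, fun h => ?_⟩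
  refine ⟨⟨q.n - p.n, ((⇑α)^[q.n - p.n] p.g)⁻¹ * q.g⟩, ?_⟩
  ext
  · exact Nat.add_sub_cancel' h
  · exact mul_inv_cancel_left _ _

theorem rIdeal_eq_rIdeal_mk_one (p : ReesProd G α) : rIdeal p = rIdeal ⟨p.n, 1⟩ := by
  ext q
  rw [mem_rIdeal_iff, mem_rIdeal_iff]

theorem isLeftReesMonoid : IsLeftReesMonoid (ReesProd G α) := by
  refine ⟨fun _ _ _ => mul_left_cancel, ?_, ⟨_, isLengthFunction_n⟩, ⟨1, 1⟩, ?_⟩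
  · refine equidivisible_of_total fun p q => ?_
    simp only [mem_rIdeal_iff]
    exact le_total q.n p.n
  · simp [isUnit_iff]

noncomputable def principalRightIdealOrderIso : PrincipalRightIdeal (ReesProd G α) ≃o ℕᵒᵈ :=
  OrderIso.symm <| OrderIso.ofSurjective
    (OrderEmbedding.ofMapLEIff (fun m => ⟨rIdeal ⟨OrderDual.ofDual m, 1⟩, _, rfl⟩) fun m k => by
      change rIdeal _ ⊆ rIdeal _ ↔ _
      rw [rIdeal_subset_rIdeal_iff, mem_rIdeal_iff]
      rfl)
    (by
      rintro ⟨_, p, rfl⟩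
      exact ⟨OrderDual.toDual p.n, Subtype.ext (rIdeal_eq_rIdeal_mk_one p).symm⟩)

end ReesProd

section Lift

variable {G S : Type*} [Group G] [Monoid S] {α : G →* G}

theorem map_mul_pow_eq_pow_mul_map_iterate {φ : G →* S} {a : S}
    (h : ∀ g, φ g * a = a * φ (α g)) (n : ℕ) (g : G) : φ g * a ^ n = a ^ n * φ ((⇑α)^[n] g) := by
  induction n generalizing g with
  | zero => simp
  | succ n ih =>
    rw [pow_succ', ← mul_assoc, h, mul_assoc, ih, ← mul_assoc, ← pow_succ',
      Function.iterate_succ_apply]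

def ReesProd.lift (φ : G →* S) (a : S) (h : ∀ g, φ g * a = a * φ (α g)) : ReesProd G α →* S where
  toFun p := a ^ p.n * φ p.g
  map_one' := by simp
  map_mul' p q := by
    simp only [ReesProd.mul_n, ReesProd.mul_g, map_mul, pow_add, mul_assoc]
    rw [← mul_assoc (φ p.g), map_mul_pow_eq_pow_mul_map_iterate h, mul_assoc]

end Lift

section Converse

variable {S : Type*} [Monoid S] {l : S → ℕ} {a : S}

theorem exists_generator_of_orderIso [IsLeftCancelMul S] (e : PrincipalRightIdeal S ≃o ℕᵒᵈ) :
    ∃ a : S, ¬IsUnit a ∧ ∀ b : S, ¬IsUnit b → b ∈ rIdeal a := by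
  let ideal (b : S) : PrincipalRightIdeal S := ⟨rIdeal b, b, rfl⟩
  have le_ideal_one (T : PrincipalRightIdeal S) : T ≤ ideal 1 := by
    obtain ⟨_, b, rfl⟩ := T
    exact rIdeal_subset_rIdeal_iff.2 ⟨b, one_mul b⟩
  have he_one : e (ideal 1) = ⊤ := top_unique <| e.apply_symm_apply ⊤ ▸ e.monotone (le_ideal_one _)
  have he_eq_top (b : S) : e (ideal b) = ⊤ ↔ IsUnit b := by
    rw [← he_one, e.apply_eq_iff_eq, Subtype.ext_iff]
    exact rIdeal_eq_rIdeal_one_iff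
  obtain ⟨a, ha⟩ := (e.symm (OrderDual.toDual 1)).2
  have hideal_a : ideal a = e.symm (OrderDual.toDual 1) := Subtype.ext ha.symm
  refine ⟨a, fun hunit => ?_, fun b hb => ?_⟩
  · have h := (he_eq_top a).2 hunit
    rw [hideal_a, e.apply_symm_apply] at h
    exact absurd h (by decide)
  · have hle : e (ideal b) ≤ OrderDual.toDual 1 := by
      rw [OrderDual.le_toDual, Nat.one_le_iff_ne_zero]
      exact fun h0 => hb ((he_eq_top b).1 h0)
    have hsub : ideal b ≤ ideal a := hideal_a ▸ e.le_symm_apply.2 hle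
    exact rIdeal_subset_rIdeal_iff.1 hsub

theorem exists_eq_pow_mul_unit (hl : IsLengthFunction l) (ha : ¬IsUnit a)
    (hgen : ∀ b : S, ¬IsUnit b → b ∈ rIdeal a) (b : S) : ∃ (n : ℕ) (u : Sˣ), a ^ n * u = b := by
  induction hlb : l b using Nat.strong_induction_on generalizing b with
  | _ N ih =>
    by_cases hb : IsUnit b
    · obtain ⟨u, rfl⟩ := hb
      exact ⟨0, u, by rw [pow_zero, one_mul]⟩
    · obtain ⟨s, rfl⟩ := hgen b hb
      have hla : 0 < l a := Nat.pos_of_ne_zero (mt hl.eq_zero_iff.1 ha)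
      obtain ⟨n, u, rfl⟩ := ih (l s) (by rw [← hlb, hl.map_mul]; omega) s rfl
      exact ⟨n + 1, u, by rw [pow_succ', mul_assoc]⟩

theorem exists_unit_mul_eq_mul_unit (hl : IsLengthFunction l) (ha : ¬IsUnit a)
    (hgen : ∀ b : S, ¬IsUnit b → b ∈ rIdeal a) (g : Sˣ) : ∃ h : Sˣ, (g : S) * a = a * h := by
  have hlga : l (g * a) = l a := by rw [hl.map_mul, hl.map_unit, zero_add]
  obtain ⟨s, hs⟩ := hgen (g * a) fun hu => ha (hl.eq_zero_iff.1 (hlga ▸ hl.eq_zero_iff.2 hu))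
  have hls : l s = 0 := by
    have h := congrArg l hs
    rw [hl.map_mul, hlga] at h
    omega
  obtain ⟨h, rfl⟩ := hl.eq_zero_iff.1 hls
  exact ⟨h, hs.symm⟩

noncomputable def unitShift [IsLeftCancelMul S] (hl : IsLengthFunction l) (ha : ¬IsUnit a)
    (hgen : ∀ b : S, ¬IsUnit b → b ∈ rIdeal a) : Sˣ →* Sˣ :=
  have hf := Classical.skolem.1 (exists_unit_mul_eq_mul_unit hl ha hgen)
  MonoidHom.mk' hf.choose fun g h => Units.ext <| mul_left_cancel (a := a) <| by
    rw [← hf.choose_spec, Units.val_mul, Units.val_mul, mul_assoc, hf.choose_spec h, ← mul_assoc,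
      hf.choose_spec g, mul_assoc]

theorem unit_mul_eq_mul_unitShift [IsLeftCancelMul S] (hl : IsLengthFunction l) (ha : ¬IsUnit a)
    (hgen : ∀ b : S, ¬IsUnit b → b ∈ rIdeal a) (g : Sˣ) :
    (g : S) * a = a * unitShift hl ha hgen g :=
  (Classical.skolem.1 (exists_unit_mul_eq_mul_unit hl ha hgen)).choose_spec g

theorem ReesProd.lift_coeHom_injective [IsLeftCancelMul S] (hl : IsLengthFunction l)
    (ha : ¬IsUnit a) {α : Sˣ →* Sˣ} (h : ∀ g : Sˣ, (g : S) * a = a * α g) :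
    Function.Injective (ReesProd.lift (Units.coeHom S) a h) := by
  intro p q hpq
  have hlen (p : ReesProd Sˣ α) : l (ReesProd.lift (Units.coeHom S) a h p) = p.n * l a := by
    change l (a ^ p.n * p.g) = _
    rw [hl.map_mul, hl.map_pow, hl.map_unit, add_zero]
  have hn : p.n = q.n :=
    Nat.eq_of_mul_eq_mul_right (Nat.pos_of_ne_zero (mt hl.eq_zero_iff.1 ha))
      (by rw [← hlen, ← hlen, hpq])
  change a ^ p.n * (p.g : S) = a ^ q.n * q.g at hpq
  rw [hn] at hpq
  exact ReesProd.ext hn (Units.ext (mul_left_cancel hpq))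

theorem ReesProd.lift_coeHom_surjective (hl : IsLengthFunction l) (ha : ¬IsUnit a)
    (hgen : ∀ b : S, ¬IsUnit b → b ∈ rIdeal a) {α : Sˣ →* Sˣ}
    (h : ∀ g : Sˣ, (g : S) * a = a * α g) :
    Function.Surjective (ReesProd.lift (Units.coeHom S) a h) := fun b =>
  let ⟨n, u, hb⟩ := exists_eq_pow_mul_unit hl ha hgen b
  ⟨⟨n, u⟩, hb⟩

end Converse

/-- Rees's theorem: `ℕ ∗_α G` is a left Rees monoid whose principal right ideals
form an infinite descending chain isomorphic to `ℕ` reversed; and every left Rees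
monoid with such a chain of principal right ideals arises this way. -/
theorem stmt15 :
    (∀ (G : Type u) [Group G] (α : G →* G),
      IsLeftReesMonoid (ReesProd G α) ∧
        Nonempty ({T : Set (ReesProd G α) // ∃ a, T = rIdeal a} ≃o ℕᵒᵈ)) ∧
    (∀ (S : Type u) [Monoid S], IsLeftReesMonoid S →
      Nonempty ({T : Set S // ∃ a : S, T = rIdeal a} ≃o ℕᵒᵈ) →
      ∃ (G : Type u) (_ : Group G) (α : G →* G), Nonempty (S ≃* ReesProd G α)) := by
  refine ⟨fun G _ α => ⟨ReesProd.isLeftReesMonoid, ⟨ReesProd.principalRightIdealOrderIso⟩⟩, ?_⟩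
  rintro S _ ⟨hcancel, -, ⟨l, hl⟩, -⟩ ⟨e⟩
  have : IsLeftCancelMul S := ⟨fun a _ _ => hcancel a _ _⟩
  obtain ⟨a, ha, hgen⟩ := exists_generator_of_orderIso e
  have h := unit_mul_eq_mul_unitShift hl ha hgen
  exact ⟨Sˣ, inferInstance, unitShift hl ha hgen, ⟨(MulEquiv.ofBijective _
    ⟨ReesProd.lift_coeHom_injective hl ha h, ReesProd.lift_coeHom_surjective hl ha hgen h⟩).symm⟩⟩
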